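/- Let $N\geq3$, $q>1$, $\lambda,\theta\in\mathbb{R}$ satisfy $\ell=\Theta^2-(N-2)\Theta+\lambda>0$, where $\Theta=(\theta+2)/(q-1)$. Fix a suitable $\alpha>0$ small depending only on $N,q,\theta,\lambda$, and let $\nu>0$. For $\varepsilon\in(0,1)$ there exists $\eta_0>0$ such that for every $\eta\in(0,\eta_0)$ the function $w^+_{\varepsilon,\eta}(x)=(1+\varepsilon)\ell^{1/(q-1)}|x|^{-\Theta}|x|^{-\eta}\left(1+\frac{|x|^\alpha}{\nu}\right)^{1/\sqrt{\alpha}}$ satisfies $-\Delta w^+_{\varepsilon,\eta}-\lambda|x|^{-2}w^+_{\varepsilon,\eta}+|x|^\theta (w^+_{\varepsilon,\eta})^q\geq 0$ in $B_1(0)\setminus\{0\}$. -/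

import Mathlib

/-!
A radial function `g ‖x‖` with `r g' = A g` and `r A' = B` satisfies
`r² Δ = (A² + (N - 2) A + B) g`. For `w = C r^(-Θ-η) (1 + T)^(1/√α)`, `T = r^α / ν`, this holds
with `A = -(Θ + η) + √α S`, `B = α √α S (1 - S)`, `S = T / (1 + T)`, and the inequality becomes
`A² + (N - 2) A + B + λ ≤ r^(θ+2) w^(q-1) = ℓ (1 + ε)^(q-1) r^(-η(q-1)) (1 + T)^((q-1)/√α)`.
The left side is at most `ℓ + η (2Θ + η - N + 2) + √α (N + 2|Θ|) S`. As `r < 1`, Bernoulli's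
inequality (`(q-1)/√α ≥ 1`) bounds the right side below by `ℓ (1 + ε)^(q-1) + ℓ (q-1) S / √α`.
A small `η` absorbs the first excess into `(1 + ε)^(q-1)`, a small `α` the second.
-/

open scoped BigOperators

noncomputable def lap {N : ℕ} (u : EuclideanSpace ℝ (Fin N) → ℝ)
    (x : EuclideanSpace ℝ (Fin N)) : ℝ :=
  ∑ i : Fin N, fderiv ℝ (fun y => fderiv ℝ u y (EuclideanSpace.single i 1)) x
    (EuclideanSpace.single i 1)

theorem hasFDerivAt_norm_of_ne_zero {F : Type*} [NormedAddCommGroup F] [InnerProductSpace ℝ F]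
    {x : F} (hx : x ≠ 0) : HasFDerivAt (fun y : F => ‖y‖) (‖x‖⁻¹ • innerSL ℝ x) x := by
  have h := (hasStrictFDerivAt_norm_sq x).hasFDerivAt.sqrt (by positivity)
  simp only [Real.sqrt_sq (norm_nonneg _)] at h
  refine h.congr_fderiv ?_
  ext v
  simp only [one_div, mul_inv_rev, smul_apply, coe_innerSL_apply,
    nsmul_eq_mul, Nat.cast_ofNat, smul_eq_mul]
  field_simp

theorem HasDerivAt.hasFDerivAt_comp_norm {F : Type*} [NormedAddCommGroup F]
    [InnerProductSpace ℝ F] {g : ℝ → ℝ} {g' : ℝ} {x : F} (hg : HasDerivAt g g' ‖x‖)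
    (hx : x ≠ 0) : HasFDerivAt (fun y => g ‖y‖) ((g' / ‖x‖) • innerSL ℝ x) x := by
  refine (hg.comp_hasFDerivAt x (hasFDerivAt_norm_of_ne_zero hx)).congr_fderiv ?_
  rw [smul_smul, div_eq_mul_inv]

theorem lap_comp_norm {N : ℕ} {g g' g'' : ℝ → ℝ}
    (hg : ∀ r, 0 < r → HasDerivAt g (g' r) r) (hg' : ∀ r, 0 < r → HasDerivAt g' (g'' r) r)
    {x : EuclideanSpace ℝ (Fin N)} (hx : x ≠ 0) :
    lap (fun y => g ‖y‖) x = g'' ‖x‖ + (N - 1) / ‖x‖ * g' ‖x‖ := by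
  have hr : 0 < ‖x‖ := norm_pos_iff.mpr hx
  have hgr : ∀ r, 0 < r → HasDerivAt (fun r => g' r / r) ((g'' r * r - g' r) / r ^ 2) r :=
    fun r hr => by simpa using (hg' r hr).fun_div (hasDerivAt_id' r) hr.ne'
  have hdir : ∀ i : Fin N, (fun y => fderiv ℝ (fun y => g ‖y‖) y (EuclideanSpace.single i 1))
      =ᶠ[nhds x] fun y => g' ‖y‖ / ‖y‖ * y i := by
    intro i
    filter_upwards [isOpen_ne.mem_nhds hx] with y hy
    rw [((hg _ (norm_pos_iff.mpr hy)).hasFDerivAt_comp_norm hy).fderiv]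
    simp [EuclideanSpace.inner_single_right]
  have hsecond : ∀ i : Fin N, fderiv ℝ (fun y => g' ‖y‖ / ‖y‖ * y i) x
      (EuclideanSpace.single i 1) = (g'' ‖x‖ * ‖x‖ - g' ‖x‖) / ‖x‖ ^ 2 / ‖x‖ * x i ^ 2
        + g' ‖x‖ / ‖x‖ := by
    intro i
    have h : HasFDerivAt (fun y => g' ‖y‖ / ‖y‖ * y i) _ x :=
      ((hgr _ hr).hasFDerivAt_comp_norm hx).fun_mul
        (EuclideanSpace.proj i : EuclideanSpace ℝ (Fin N) →L[ℝ] ℝ).hasFDerivAt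
    rw [h.fderiv]
    simp only [add_apply, smul_apply, PiLp.proj_apply,
      PiLp.single_eq_same, smul_eq_mul, mul_one, coe_innerSL_apply,
      EuclideanSpace.inner_single_right, Real.ringHom_apply, one_mul]
    ring
  have hsum : ∑ i, x i ^ 2 = ‖x‖ ^ 2 := by
    simp [EuclideanSpace.norm_sq_eq]
  rw [lap, Finset.sum_congr rfl fun i _ => by rw [(hdir i).fderiv_eq, hsecond i]]
  simp only [Finset.sum_add_distrib,
    ← Finset.mul_sum, hsum, Finset.sum_const, Finset.card_univ, Fintype.card_fin, nsmul_eq_mul]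
  field_simp
  ring

theorem sq_norm_mul_lap_comp_norm {N : ℕ} {g A B : ℝ → ℝ}
    (hg : ∀ r, 0 < r → HasDerivAt g (A r * g r / r) r)
    (hA : ∀ r, 0 < r → HasDerivAt A (B r / r) r)
    {x : EuclideanSpace ℝ (Fin N)} (hx : x ≠ 0) :
    ‖x‖ ^ 2 * lap (fun y => g ‖y‖) x = (A ‖x‖ ^ 2 + (N - 2) * A ‖x‖ + B ‖x‖) * g ‖x‖ := by
  have hg' : ∀ r, 0 < r →
      HasDerivAt (fun r => A r * g r / r) ((A r ^ 2 - A r + B r) * g r / r ^ 2) r := by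
    intro r hr
    refine (((hA r hr).fun_mul (hg r hr)).fun_div (hasDerivAt_id' r) hr.ne').congr_deriv ?_
    field_simp
    ring
  have hr : ‖x‖ ≠ 0 := norm_ne_zero_iff.mpr hx
  rw [lap_comp_norm hg hg' hx]
  field_simp
  ring

theorem hasDerivAt_rpow_const_of_pos {p r : ℝ} (hr : 0 < r) :
    HasDerivAt (fun r => r ^ p) (p * r ^ p / r) r := by
  simpa [Real.rpow_sub_one hr.ne', mul_div_assoc] using
    Real.hasDerivAt_rpow_const (p := p) (Or.inl hr.ne')

noncomputable def powRatio (α ν r : ℝ) : ℝ := r ^ α / ν / (1 + r ^ α / ν)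

/-- `radialProfile ((1 + ε) * ℓ ^ (1 / (q - 1))) Θ η α ν (1 / √α)` is the paper's `w⁺_{ε,η}`
as a function of `r = |x|`. -/
noncomputable def radialProfile (C Θ η α ν m r : ℝ) : ℝ :=
  C * r ^ (-Θ) * r ^ (-η) * (1 + r ^ α / ν) ^ m

section profile

variable {α ν r : ℝ}

theorem hasDerivAt_rpow_div_const (hr : 0 < r) :
    HasDerivAt (fun r => r ^ α / ν) (α * (r ^ α / ν) / r) r :=
  ((hasDerivAt_rpow_const_of_pos hr).div_const ν).congr_deriv (by ring)

theorem hasDerivAt_powRatio (hν : 0 < ν) (hr : 0 < r) :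
    HasDerivAt (powRatio α ν) (α * powRatio α ν r * (1 - powRatio α ν r) / r) r := by
  have hG : 1 + r ^ α / ν ≠ 0 := by positivity
  refine ((hasDerivAt_rpow_div_const hr).fun_div
    ((hasDerivAt_rpow_div_const hr).const_add 1) hG).congr_deriv ?_
  unfold powRatio
  field_simp

theorem hasDerivAt_radialProfile (C Θ η m : ℝ) (hν : 0 < ν) (hr : 0 < r) :
    HasDerivAt (radialProfile C Θ η α ν m)
      ((-(Θ + η) + m * α * powRatio α ν r) * radialProfile C Θ η α ν m r / r) r := by
  have hG : 0 < 1 + r ^ α / ν := by positivity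
  have hpow := ((hasDerivAt_rpow_div_const (ν := ν) hr).const_add 1).rpow_const
    (p := m) (Or.inl hG.ne')
  refine ((((hasDerivAt_rpow_const_of_pos (p := -Θ) hr).const_mul C).fun_mul
    (hasDerivAt_rpow_const_of_pos (p := -η) hr)).fun_mul hpow).congr_deriv ?_
  rw [Real.rpow_sub_one hG.ne']
  unfold radialProfile powRatio
  field_simp
  ring

theorem sq_norm_mul_lap_radialProfile {N : ℕ} (C Θ η m : ℝ) (hν : 0 < ν)
    {x : EuclideanSpace ℝ (Fin N)} (hx : x ≠ 0) :
    ‖x‖ ^ 2 * lap (fun y => radialProfile C Θ η α ν m ‖y‖) x =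
      ((-(Θ + η) + m * α * powRatio α ν ‖x‖) ^ 2
        + (N - 2) * (-(Θ + η) + m * α * powRatio α ν ‖x‖)
        + m * α * (α * powRatio α ν ‖x‖ * (1 - powRatio α ν ‖x‖)))
        * radialProfile C Θ η α ν m ‖x‖ := by
  refine sq_norm_mul_lap_comp_norm
    (B := fun r => m * α * (α * powRatio α ν r * (1 - powRatio α ν r)))
    (fun r hr => hasDerivAt_radialProfile (α := α) C Θ η m hν hr) (fun r hr => ?_) hx
  exact (((hasDerivAt_powRatio hν hr).const_mul (m * α)).const_add (-(Θ + η))).congr_deriv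
    (by ring)

end profile

theorem logDeriv_quadratic_le {n Θ η lam ℓ a S : ℝ} (hℓ : ℓ = Θ ^ 2 - (n - 2) * Θ + lam)
    (hη : 0 ≤ η) (ha0 : 0 ≤ a) (ha1 : a ≤ 1) (hS0 : 0 ≤ S) (hS1 : S ≤ 1) :
    (-(Θ + η) + a * S) ^ 2 + (n - 2) * (-(Θ + η) + a * S) + a * (a ^ 2 * S * (1 - S)) + lam
      ≤ ℓ + η * (2 * Θ + η - (n - 2)) + a * (n + 2 * |Θ|) * S := by
  have haS : a * S ≤ 1 := mul_le_one₀ ha1 hS0 hS1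
  have ha2S : a ^ 2 * (1 - S) ≤ 1 := mul_le_one₀ (pow_le_one₀ ha0 ha1) (by linarith) (by linarith)
  have hbracket : n - 2 - 2 * (Θ + η) + a * S + a ^ 2 * (1 - S) ≤ n + 2 * |Θ| := by
    linarith [neg_abs_le Θ]
  have := mul_le_mul_of_nonneg_left hbracket (mul_nonneg ha0 hS0)
  subst hℓ
  linear_combination this

theorem add_mul_div_one_add_le {ℓ E M ρ T : ℝ} (hℓ : 0 ≤ ℓ) (hE : 1 ≤ E) (hM : 1 ≤ M)
    (hρ : 1 ≤ ρ) (hT : 0 ≤ T) :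
    ℓ * E + ℓ * M * (T / (1 + T)) ≤ ℓ * E * ρ * (1 + T) ^ M := by
  have hS : T / (1 + T) ≤ T := div_le_self hT (by linarith)
  have hBernoulli : 1 + M * T ≤ (1 + T) ^ M := one_add_mul_self_le_rpow_one_add (by linarith) hM
  have hG : 1 ≤ (1 + T) ^ M := by linarith [mul_nonneg (by linarith : (0 : ℝ) ≤ M) hT]
  calc ℓ * E + ℓ * M * (T / (1 + T)) ≤ ℓ * E * (1 + M * T) := by
        nlinarith [mul_le_mul_of_nonneg_left hS (mul_nonneg hℓ (by linarith : (0 : ℝ) ≤ M)),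
          mul_nonneg (mul_nonneg hℓ (by linarith : (0 : ℝ) ≤ M)) hT]
    _ ≤ ℓ * E * (1 + T) ^ M := by gcongr
    _ ≤ ℓ * E * (1 + T) ^ M * ρ := le_mul_of_one_le_right (by positivity) hρ
    _ = ℓ * E * ρ * (1 + T) ^ M := by ring

theorem logDeriv_quadratic_add_le {n Θ η lam ℓ a q E ρ T : ℝ}
    (hℓ : ℓ = Θ ^ 2 - (n - 2) * Θ + lam) (hℓpos : 0 < ℓ) (hη : 0 ≤ η) (ha0 : 0 < a)
    (ha1 : a ≤ 1) (haq : a ≤ q - 1) (haℓ : a ^ 2 * (n + 2 * |Θ|) ≤ ℓ * (q - 1)) (hE : 1 ≤ E)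
    (hηE : η * (2 * Θ + η - (n - 2)) ≤ ℓ * (E - 1)) (hρ : 1 ≤ ρ) (hT : 0 ≤ T) :
    (-(Θ + η) + a * (T / (1 + T))) ^ 2 + (n - 2) * (-(Θ + η) + a * (T / (1 + T)))
      + a * (a ^ 2 * (T / (1 + T)) * (1 - T / (1 + T))) + lam
      ≤ ℓ * E * ρ * (1 + T) ^ (1 / a * (q - 1)) := by
  have hS0 : 0 ≤ T / (1 + T) := by positivity
  have hS1 : T / (1 + T) ≤ 1 := (div_le_one (by positivity)).mpr (by linarith)
  have hM : 1 ≤ 1 / a * (q - 1) := by rw [one_div_mul_eq_div, le_div_iff₀ ha0]; linarith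
  have haK : a * (n + 2 * |Θ|) ≤ ℓ * (1 / a * (q - 1)) := by
    rw [← mul_le_mul_iff_left₀ ha0]
    field_simp
    linarith
  have hquad := logDeriv_quadratic_le hℓ hη ha0.le ha1 hS0 hS1
  have hgrowth := add_mul_div_one_add_le hℓpos.le hE hM hρ hT
  linarith [mul_le_mul_of_nonneg_right haK hS0]

theorem rpow_mul_radialProfile_rpow {q θ Θ η ℓ ε α ν m r : ℝ} (hq : 1 < q)
    (hΘ : Θ * (q - 1) = θ + 2) (hℓ : 0 < ℓ) (hε : 0 < 1 + ε) (hν : 0 < ν) (hr : 0 < r) :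
    r ^ θ * radialProfile ((1 + ε) * ℓ ^ (1 / (q - 1))) Θ η α ν m r ^ q
      = radialProfile ((1 + ε) * ℓ ^ (1 / (q - 1))) Θ η α ν m r / r ^ 2
        * (ℓ * (1 + ε) ^ (q - 1) * r ^ (-(η * (q - 1))) * (1 + r ^ α / ν) ^ (m * (q - 1))) := by
  set W := radialProfile ((1 + ε) * ℓ ^ (1 / (q - 1))) Θ η α ν m r
  have hW : 0 < W := by unfold W radialProfile; positivity
  have hsplit : W ^ q = W * W ^ (q - 1) := by
    rw [Real.rpow_sub_one hW.ne', mul_div_cancel₀ _ hW.ne']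
  have hpow : W ^ (q - 1) = (1 + ε) ^ (q - 1) * ℓ * r ^ (-(Θ * (q - 1)))
      * r ^ (-(η * (q - 1))) * (1 + r ^ α / ν) ^ (m * (q - 1)) := by
    simp only [W, radialProfile]
    rw [Real.mul_rpow (by positivity) (by positivity),
      Real.mul_rpow (by positivity) (by positivity), Real.mul_rpow (by positivity) (by positivity),
      Real.mul_rpow (by positivity) (by positivity),
      ← Real.rpow_mul hℓ.le, ← Real.rpow_mul hr.le, ← Real.rpow_mul hr.le,
      ← Real.rpow_mul (by positivity), one_div_mul_cancel (by linarith), Real.rpow_one]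
    ring_nf
  have hθ : r ^ θ * r ^ (-(Θ * (q - 1))) = 1 / r ^ 2 := by
    rw [← Real.rpow_add hr, hΘ, show θ + -(θ + 2) = -(2 : ℕ) by ring, Real.rpow_neg hr.le,
      Real.rpow_natCast, one_div]
  rw [hsplit, hpow]
  linear_combination (W * (1 + ε) ^ (q - 1) * ℓ * r ^ (-(η * (q - 1)))
    * (1 + r ^ α / ν) ^ (m * (q - 1))) * hθ

theorem radialProfile_supersolution {N : ℕ} {q θ lam Θ ℓ α ν ε η : ℝ} (hq : 1 < q)
    (hΘ : Θ = (θ + 2) / (q - 1)) (hℓ : ℓ = Θ ^ 2 - ((N : ℝ) - 2) * Θ + lam) (hℓpos : 0 < ℓ)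
    (hα0 : 0 < α) (hα1 : α ≤ 1) (hαq : α ≤ (q - 1) ^ 2)
    (hαℓ : α * (N + 2 * |Θ|) ≤ ℓ * (q - 1)) (hν : 0 < ν) (hε : 0 < ε) (hη : 0 < η)
    (hηε : η * (2 * Θ + η - (N - 2)) ≤ ℓ * ((1 + ε) ^ (q - 1) - 1))
    {x : EuclideanSpace ℝ (Fin N)} (hx0 : 0 < ‖x‖) (hx1 : ‖x‖ < 1) :
    0 ≤ -lap (fun y => radialProfile ((1 + ε) * ℓ ^ (1 / (q - 1))) Θ η α ν (1 / √α) ‖y‖) x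
      - lam / ‖x‖ ^ 2 * radialProfile ((1 + ε) * ℓ ^ (1 / (q - 1))) Θ η α ν (1 / √α) ‖x‖
      + ‖x‖ ^ θ * radialProfile ((1 + ε) * ℓ ^ (1 / (q - 1))) Θ η α ν (1 / √α) ‖x‖ ^ q := by
  set a := √α
  have ha0 : 0 < a := Real.sqrt_pos.mpr hα0
  have haa : a ^ 2 = α := Real.sq_sqrt hα0.le
  have hlap := sq_norm_mul_lap_radialProfile (α := α) ((1 + ε) * ℓ ^ (1 / (q - 1))) Θ η (1 / a)
    hν (norm_pos_iff.mp hx0)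
  rw [show 1 / a * α = a by rw [← haa]; field_simp] at hlap
  have hsource := rpow_mul_radialProfile_rpow (θ := θ) (Θ := Θ) (η := η) (ε := ε) (α := α)
    (m := 1 / a) hq (by rw [hΘ]; field_simp [(by linarith : q - 1 ≠ 0)]) hℓpos (by linarith) hν hx0
  have hE : 1 ≤ (1 + ε) ^ (q - 1) := Real.one_le_rpow (by linarith) (by linarith)
  have hρ : 1 ≤ ‖x‖ ^ (-(η * (q - 1))) :=
    Real.one_le_rpow_of_pos_of_le_one_of_nonpos hx0 hx1.le (by nlinarith)
  have hkey := logDeriv_quadratic_add_le hℓ hℓpos hη.le ha0 (Real.sqrt_le_one.mpr hα1)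
    ((Real.sqrt_le_left (by linarith)).mpr hαq) (by rwa [haa]) hE hηε hρ
    (by positivity : 0 ≤ ‖x‖ ^ α / ν)
  rw [haa] at hkey
  set W := radialProfile ((1 + ε) * ℓ ^ (1 / (q - 1))) Θ η α ν (1 / a) ‖x‖
  have hW : 0 < W := by unfold W radialProfile; positivity
  unfold powRatio at hlap
  rw [← mul_div_cancel_left₀ (lap _ x) (pow_ne_zero 2 hx0.ne'), hlap, hsource]
  linear_combination mul_le_mul_of_nonneg_left hkey (div_nonneg hW.le (sq_nonneg ‖x‖))

theorem stmt_14_general (N : ℕ) (q θ lam : ℝ) (hq : 1 < q)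
    (Θ ℓ : ℝ) (hΘ : Θ = (θ + 2) / (q - 1))
    (hℓ : ℓ = Θ ^ 2 - ((N : ℝ) - 2) * Θ + lam) (hℓpos : 0 < ℓ) :
    ∃ α : ℝ, 0 < α ∧ ∀ ν : ℝ, 0 < ν → ∀ ε ∈ Set.Ioo (0 : ℝ) 1,
      ∃ η₀ : ℝ, 0 < η₀ ∧ ∀ η ∈ Set.Ioo (0 : ℝ) η₀,
        ∀ x : EuclideanSpace ℝ (Fin N), 0 < ‖x‖ → ‖x‖ < 1 →
          0 ≤ -lap (fun y => (1 + ε) * ℓ ^ (1 / (q - 1)) * ‖y‖ ^ (-Θ) * ‖y‖ ^ (-η)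
                * (1 + ‖y‖ ^ α / ν) ^ (1 / Real.sqrt α)) x
            - lam / ‖x‖ ^ 2 * ((1 + ε) * ℓ ^ (1 / (q - 1)) * ‖x‖ ^ (-Θ) * ‖x‖ ^ (-η)
                * (1 + ‖x‖ ^ α / ν) ^ (1 / Real.sqrt α))
            + ‖x‖ ^ θ * ((1 + ε) * ℓ ^ (1 / (q - 1)) * ‖x‖ ^ (-Θ) * ‖x‖ ^ (-η)
                * (1 + ‖x‖ ^ α / ν) ^ (1 / Real.sqrt α)) ^ q := by
  have hq1 : 0 < q - 1 := by linarith
  obtain ⟨α, hα0, hα1, hαq, hαℓ⟩ : ∃ α : ℝ, 0 < α ∧ α ≤ 1 ∧ α ≤ (q - 1) ^ 2 ∧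
      α * (N + 2 * |Θ|) ≤ ℓ * (q - 1) := by
    set K : ℝ := N + 2 * |Θ|
    set α := min 1 (min ((q - 1) ^ 2) (ℓ * (q - 1) / (K + 1)))
    have hα0 : 0 < α := by positivity
    refine ⟨α, hα0, min_le_left _ _, (min_le_right _ _).trans (min_le_left _ _), ?_⟩
    calc α * K ≤ α * (K + 1) := by gcongr; linarith
      _ ≤ ℓ * (q - 1) :=
        (le_div_iff₀ (by positivity)).mp ((min_le_right _ _).trans (min_le_right _ _))
  refine ⟨α, hα0, fun ν hν ε hε => ?_⟩
  have hgap : 0 < ℓ * ((1 + ε) ^ (q - 1) - 1) :=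
    mul_pos hℓpos (sub_pos.mpr (Real.one_lt_rpow (by linarith [hε.1]) hq1))
  refine ⟨min 1 (ℓ * ((1 + ε) ^ (q - 1) - 1) / (2 * |Θ| + 3)), by positivity,
    fun η hη x hx0 hx1 => ?_⟩
  have hηε : η * (2 * Θ + η - (N - 2)) ≤ ℓ * ((1 + ε) ^ (q - 1) - 1) := by
    have hη1 : η ≤ 1 := hη.2.le.trans (min_le_left _ _)
    have hηgap := (le_div_iff₀ (by positivity)).mp (hη.2.le.trans (min_le_right _ _))
    nlinarith [le_abs_self Θ, (N.cast_nonneg : (0 : ℝ) ≤ N), hη.1]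
  exact radialProfile_supersolution hq hΘ hℓ hℓpos hα0 hα1 hαq hαℓ hν hε.1 hη.1 hηε hx0 hx1

theorem stmt_14 (N : ℕ) (hN : 3 ≤ N) (q θ lam : ℝ) (hq : 1 < q)
    (Θ ℓ : ℝ) (hΘ : Θ = (θ + 2) / (q - 1))
    (hℓ : ℓ = Θ ^ 2 - ((N : ℝ) - 2) * Θ + lam) (hℓpos : 0 < ℓ) :
    ∃ α : ℝ, 0 < α ∧ ∀ ν : ℝ, 0 < ν → ∀ ε ∈ Set.Ioo (0 : ℝ) 1,
      ∃ η₀ : ℝ, 0 < η₀ ∧ ∀ η ∈ Set.Ioo (0 : ℝ) η₀,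
        ∀ x : EuclideanSpace ℝ (Fin N), 0 < ‖x‖ → ‖x‖ < 1 →
          0 ≤ -lap (fun y => (1 + ε) * ℓ ^ (1 / (q - 1)) * ‖y‖ ^ (-Θ) * ‖y‖ ^ (-η)
                * (1 + ‖y‖ ^ α / ν) ^ (1 / Real.sqrt α)) x
            - lam / ‖x‖ ^ 2 * ((1 + ε) * ℓ ^ (1 / (q - 1)) * ‖x‖ ^ (-Θ) * ‖x‖ ^ (-η)
                * (1 + ‖x‖ ^ α / ν) ^ (1 / Real.sqrt α))
            + ‖x‖ ^ θ * ((1 + ε) * ℓ ^ (1 / (q - 1)) * ‖x‖ ^ (-Θ) * ‖x‖ ^ (-η)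
                * (1 + ‖x‖ ^ α / ν) ^ (1 / Real.sqrt α)) ^ q :=
  stmt_14_general N q θ lam hq Θ ℓ hΘ hℓ hℓpos
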